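/- arXiv:2301.07040 — 3 statements merged into one kernel-verified Lean document; each statement's English description precedes it below -/
import Mathlib

section
/- Let X = U Σ Vᵀ be the SVD of a rank-C matrix X ∈ ℝ^{C×M} with singular values λ₁ ≥ … ≥ λ_C > 0, where V ∈ ℝ^{M×C} has orthonormal columns. Suppose for a subset S ⊆ {1,…,M} of column indices, every unit vector x ∈ ℝ^C satisfies xᵀ X_{|S} X_{|S}ᵀ x ≥ α |S| C λ₁² / M, where X_{|S} is the submatrix of X restricted to columns in S. Then the minimum eigenvalue of V_Sᵀ V_S is at least α |S| C / M, where V_S is the submatrix of V restricted to the rows indexed by S. -/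
/-!
Write `W = V_S`. Then `X_{|S} = U Σ Wᵀ`, so the quadratic form of `X_{|S} X_{|S}ᵀ` at
`y = U Σ⁻¹ x` is the quadratic form of `Wᵀ W` at `x`. Since `U` is orthogonal,
`‖y‖ = ‖Σ⁻¹ x‖ ≥ ‖x‖ / λ₁`, and the hypothesis, rescaled from unit vectors to `y`, gives
`xᵀ Wᵀ W x ≥ (α|S|Cλ₁²/M) ‖y‖² ≥ α|S|C/M` for unit `x`.
-/

open Matrix

section QuadraticForm

variable {m n : Type*} [Fintype m] [Fintype n]

lemma dotProduct_mulVec_transpose_mul_self (A : Matrix m n ℝ) (x : n → ℝ) :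
    x ⬝ᵥ (Aᵀ * A) *ᵥ x = A *ᵥ x ⬝ᵥ A *ᵥ x := by
  rw [← mulVec_mulVec, dotProduct_mulVec, vecMul_transpose]

lemma dotProduct_mulVec_mul_mul_transpose (P : Matrix m n ℝ) (A : Matrix n n ℝ) (y : m → ℝ) :
    y ⬝ᵥ (P * A * Pᵀ) *ᵥ y = Pᵀ *ᵥ y ⬝ᵥ A *ᵥ (Pᵀ *ᵥ y) := by
  rw [← mulVec_mulVec, ← mulVec_mulVec, dotProduct_mulVec, ← mulVec_transpose]

lemma dotProduct_mulVec_transpose_mul_self_nonneg (A : Matrix m n ℝ) (x : n → ℝ) :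
    0 ≤ x ⬝ᵥ (Aᵀ * A) *ᵥ x := by
  rw [dotProduct_mulVec_transpose_mul_self]
  exact Finset.sum_nonneg fun i _ => mul_self_nonneg _

lemma mulVec_dotProduct_mulVec_self_of_transpose_mul_self_eq_one [DecidableEq n]
    {A : Matrix m n ℝ} (hA : Aᵀ * A = 1) (x : n → ℝ) : A *ᵥ x ⬝ᵥ A *ᵥ x = x ⬝ᵥ x := by
  rw [← dotProduct_mulVec_transpose_mul_self, hA, one_mulVec]

lemma sum_sq_eq_dotProduct_self (x : n → ℝ) : ∑ i, x i ^ 2 = x ⬝ᵥ x := by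
  simp only [dotProduct, sq]

lemma mul_dotProduct_self_le_of_forall_sum_sq_eq_one (A : Matrix n n ℝ) {K : ℝ}
    (h : ∀ x : n → ℝ, ∑ i, x i ^ 2 = 1 → K ≤ x ⬝ᵥ A *ᵥ x) (x : n → ℝ) :
    K * (x ⬝ᵥ x) ≤ x ⬝ᵥ A *ᵥ x := by
  rcases eq_or_ne x 0 with rfl | hx
  · simp
  have hr : 0 < x ⬝ᵥ x := by simpa using dotProduct_self_star_pos_iff.mpr hx
  set c := (Real.sqrt (x ⬝ᵥ x))⁻¹
  have hc : c * c * (x ⬝ᵥ x) = 1 := by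
    rw [← mul_inv, Real.mul_self_sqrt hr.le, inv_mul_cancel₀ hr.ne']
  have hcx := h (c • x) (by
    rw [sum_sq_eq_dotProduct_self, smul_dotProduct, dotProduct_smul, smul_eq_mul, smul_eq_mul,
      ← mul_assoc, hc])
  rw [mulVec_smul, smul_dotProduct, dotProduct_smul, smul_eq_mul, smul_eq_mul, ← mul_assoc] at hcx
  calc K * (x ⬝ᵥ x) ≤ c * c * (x ⬝ᵥ A *ᵥ x) * (x ⬝ᵥ x) := by gcongr
    _ = x ⬝ᵥ A *ᵥ x := by rw [mul_right_comm, hc, one_mul]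

end QuadraticForm

lemma submatrix_id_mul_transpose {l m n o : Type*} [Fintype n] (P : Matrix l n ℝ)
    (V : Matrix m n ℝ) (f : o → m) :
    (P * Vᵀ).submatrix id f = P * (V.submatrix f id)ᵀ := by
  ext
  simp [mul_apply]

lemma sum_sq_div_sq_le_sum_div_sq {n : Type*} [Fintype n] {lam : n → ℝ} {L : ℝ}
    (hpos : ∀ i, 0 < lam i) (hle : ∀ i, lam i ≤ L) (x : n → ℝ) :
    (∑ i, x i ^ 2) / L ^ 2 ≤ ∑ i, (x i / lam i) ^ 2 := by
  rw [Finset.sum_div]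
  gcongr with i
  rw [div_pow]
  gcongr
  · exact pow_pos (hpos i) 2
  · exact (hpos i).le
  · exact hle i

theorem min_eig_V_of_quadratic_lower_bound_general {C M : ℕ} (hC : 0 < C)
    (X : Matrix (Fin C) (Fin M) ℝ) (U : Matrix (Fin C) (Fin C) ℝ)
    (lam : Fin C → ℝ) (V : Matrix (Fin M) (Fin C) ℝ)
    (hsvd : X = U * Matrix.diagonal lam * Vᵀ)
    (hU : Uᵀ * U = 1)
    (hpos : ∀ i, 0 < lam i)
    (hmono : ∀ i j : Fin C, i ≤ j → lam j ≤ lam i)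
    (α : ℝ) (S : Finset (Fin M))
    (hquad : ∀ x : Fin C → ℝ, (∑ i, x i ^ 2) = 1 →
      α * S.card * C * lam ⟨0, hC⟩ ^ 2 / M ≤
        x ⬝ᵥ ((X.submatrix id (fun j : S => (j : Fin M))) *
              (X.submatrix id (fun j : S => (j : Fin M)))ᵀ).mulVec x) :
    ∀ x : Fin C → ℝ, (∑ i, x i ^ 2) = 1 →
      α * S.card * C / M ≤
        x ⬝ᵥ ((V.submatrix (fun j : S => (j : Fin M)) id)ᵀ *
              V.submatrix (fun j : S => (j : Fin M)) id).mulVec x := by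
  intro x hx
  set W := V.submatrix (fun j : S => (j : Fin M)) id
  set L := lam ⟨0, hC⟩
  set K : ℝ := α * S.card * C / M
  rcases lt_or_ge K 0 with hK | hK
  · exact hK.le.trans (dotProduct_mulVec_transpose_mul_self_nonneg W x)
  set z : Fin C → ℝ := fun i => x i / lam i
  set P := U * diagonal lam
  have hXS : X.submatrix id (fun j : S => (j : Fin M)) *
      (X.submatrix id (fun j : S => (j : Fin M)))ᵀ = P * (Wᵀ * W) * Pᵀ := by
    rw [hsvd, submatrix_id_mul_transpose, transpose_mul, transpose_transpose]
    simp only [Matrix.mul_assoc]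
    rfl
  have hPz : Pᵀ *ᵥ (U *ᵥ z) = x := by
    rw [transpose_mul, diagonal_transpose, ← mulVec_mulVec, mulVec_mulVec z Uᵀ U, hU, one_mulVec]
    ext i
    simp [z, mulVec_diagonal, mul_div_cancel₀ _ (hpos i).ne']
  have hz : 1 / L ^ 2 ≤ z ⬝ᵥ z := by
    rw [← hx, ← sum_sq_eq_dotProduct_self]
    exact sum_sq_div_sq_le_sum_div_sq hpos (fun i => hmono _ i (Nat.zero_le _)) x
  have hbound := mul_dotProduct_self_le_of_forall_sum_sq_eq_one _ hquad (U *ᵥ z)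
  rw [hXS, dotProduct_mulVec_mul_mul_transpose, hPz,
    mulVec_dotProduct_mulVec_self_of_transpose_mul_self_eq_one hU] at hbound
  have hL : 0 < L := hpos _
  calc K = K * L ^ 2 * (1 / L ^ 2) := by field_simp
    _ ≤ K * L ^ 2 * (z ⬝ᵥ z) := by gcongr
    _ ≤ _ := by convert hbound using 1; ring

/-- If `X = U Σ Vᵀ` is the SVD of a full-row-rank matrix `X ∈ ℝ^{C×M}` and the
quadratic form of `X_{|S} X_{|S}ᵀ` is bounded below by `α|S|Cλ₁²/M` on unit
vectors, then the minimum eigenvalue of `V_Sᵀ V_S` is at least `α|S|C/M`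
(stated as a lower bound on the quadratic form over unit vectors). -/
theorem min_eig_V_of_quadratic_lower_bound {C M : ℕ} (hC : 0 < C) (hM : 0 < M)
    (X : Matrix (Fin C) (Fin M) ℝ) (U : Matrix (Fin C) (Fin C) ℝ)
    (lam : Fin C → ℝ) (V : Matrix (Fin M) (Fin C) ℝ)
    (hsvd : X = U * Matrix.diagonal lam * Vᵀ)
    (hU : Uᵀ * U = 1) (hV : Vᵀ * V = 1)
    (hpos : ∀ i, 0 < lam i)
    (hmono : ∀ i j : Fin C, i ≤ j → lam j ≤ lam i)
    (α : ℝ) (S : Finset (Fin M))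
    (hquad : ∀ x : Fin C → ℝ, (∑ i, x i ^ 2) = 1 →
      α * S.card * C * lam ⟨0, hC⟩ ^ 2 / M ≤
        x ⬝ᵥ ((X.submatrix id (fun j : S => (j : Fin M))) *
              (X.submatrix id (fun j : S => (j : Fin M)))ᵀ).mulVec x) :
    ∀ x : Fin C → ℝ, (∑ i, x i ^ 2) = 1 →
      α * S.card * C / M ≤
        x ⬝ᵥ ((V.submatrix (fun j : S => (j : Fin M)) id)ᵀ *
              V.submatrix (fun j : S => (j : Fin M)) id).mulVec x :=
  min_eig_V_of_quadratic_lower_bound_general hC X U lam V hsvd hU hpos hmono α S hquad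
end

section
/- Let P̃, P ∈ ℝ^{N×M} satisfy ‖P̃ − P‖_∞ ≤ Δ entrywise on the columns in a set N₀, and define for each row u the set T_u = { j ∈ N₀ : max_{j'∈N₀} P̃_{u j'} − P̃_{u j} ≤ 2Δ }. Suppose rows u and v satisfy: (i) T_u ∩ T_v ≠ ∅, and (ii) |P̃_{u x} − P̃_{v x}| ≤ 2Δ for all x ∈ N₀. Then for all x ∈ T_u and y ∈ T_v, |P_{u x} − P_{u y}| ≤ 16Δ and |P_{v x} − P_{v y}| ≤ 16Δ. -/
/-!
Rows whose estimates are `2Δ`-close on `N0` have `2Δ`-close maxima there, so a `2Δ`-good arm of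
one row is a `6Δ`-good arm of the other. Any two good arms of a row therefore have estimates
within `6Δ`, and true rewards within `8Δ ≤ 16Δ`.
-/

namespace Finset

variable {ι α : Type*} [AddCommGroup α] [LinearOrder α] [IsOrderedAddMonoid α]
  {s : Finset ι} (hs : s.Nonempty) {f g : ι → α} {δ ε ε' : α} {i j : ι}

include hs in
theorem sup'_le_sup'_add_of_abs_sub_le (h : ∀ k ∈ s, |f k - g k| ≤ δ) :
    s.sup' hs f ≤ s.sup' hs g + δ :=
  sup'_le hs f fun k hk =>
    calc f k ≤ g k + δ := sub_le_iff_le_add'.mp (abs_sub_le_iff.mp (h k hk)).1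
      _ ≤ s.sup' hs g + δ := add_le_add_left (le_sup' g hk) δ

theorem sup'_sub_le_of_abs_sub_le (h : ∀ k ∈ s, |f k - g k| ≤ δ) (hi : i ∈ s)
    (hg : s.sup' hs g - g i ≤ ε) : s.sup' hs f - f i ≤ ε + δ + δ := by
  have hsup := sup'_le_sup'_add_of_abs_sub_le hs h
  have hfi : g i - f i ≤ δ := (abs_sub_le_iff.mp (h i hi)).2
  calc s.sup' hs f - f i = (s.sup' hs f - s.sup' hs g) + (s.sup' hs g - g i) + (g i - f i) := by
        abel
    _ ≤ δ + ε + δ := add_le_add (add_le_add (sub_le_iff_le_add'.mpr hsup) hg) hfi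
    _ = ε + δ + δ := by abel

theorem abs_sub_le_max_of_sup'_sub_le (hi : i ∈ s) (hj : j ∈ s)
    (hfi : s.sup' hs f - f i ≤ ε) (hfj : s.sup' hs f - f j ≤ ε') : |f i - f j| ≤ max ε ε' :=
  abs_sub_le_iff.mpr
    ⟨((sub_le_sub_right (le_sup' f hi) _).trans hfj).trans (le_max_right _ _),
      ((sub_le_sub_right (le_sup' f hj) _).trans hfi).trans (le_max_left _ _)⟩

end Finset

theorem good_arms_of_adjacent_users_general {N M : ℕ}
    (Pt P : Matrix (Fin N) (Fin M) ℝ) (Δ : ℝ)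
    (N0 : Finset (Fin M)) (hne : N0.Nonempty)
    (hb : ∀ i : Fin N, ∀ j ∈ N0, |Pt i j - P i j| ≤ Δ)
    (T : Fin N → Finset (Fin M))
    (hT : ∀ w, T w = N0.filter fun j =>
      N0.sup' hne (fun j' => Pt w j') - Pt w j ≤ 2 * Δ)
    (u v : Fin N)
    (h2 : ∀ x ∈ N0, |Pt u x - Pt v x| ≤ 2 * Δ) :
    ∀ x ∈ T u, ∀ y ∈ T v,
      |P u x - P u y| ≤ 16 * Δ ∧ |P v x - P v y| ≤ 16 * Δ := by
  have hΔ : 0 ≤ Δ := (abs_nonneg _).trans (hb u _ hne.choose_spec)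
  have good {w j} (hj : j ∈ T w) : j ∈ N0 ∧ N0.sup' hne (Pt w) - Pt w j ≤ 2 * Δ := by
    rw [hT, Finset.mem_filter] at hj
    exact hj
  have bound {w w'} (hww' : ∀ k ∈ N0, |Pt w k - Pt w' k| ≤ 2 * Δ) {x y}
      (hx : x ∈ T w) (hy : y ∈ T w') : |P w x - P w y| ≤ 16 * Δ := by
    obtain ⟨hxN, hxgood⟩ := good hx
    obtain ⟨hyN, hygood⟩ := good hy
    have hy' := Finset.sup'_sub_le_of_abs_sub_le hne hww' hyN hygood
    have hPt := Finset.abs_sub_le_max_of_sup'_sub_le hne hxN hyN hxgood hy'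
    rw [max_eq_right (by linarith)] at hPt
    calc |P w x - P w y| ≤ |P w x - Pt w x| + (|Pt w x - Pt w y| + |Pt w y - P w y|) :=
          (abs_sub_le _ (Pt w x) _).trans (add_le_add_right (abs_sub_le _ _ _) _)
      _ ≤ Δ + (2 * Δ + 2 * Δ + 2 * Δ + Δ) := by
          gcongr
          · exact abs_sub_comm (P w x) _ ▸ hb w x hxN
          · exact hb w y hyN
      _ ≤ 16 * Δ := by linarith
  intro x hx y hy
  refine ⟨bound h2 hx hy, abs_sub_comm (P v x) _ ▸ bound ?_ hy hx⟩
  exact fun k hk => abs_sub_comm (Pt v k) _ ▸ h2 k hk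

/-- If two users `u, v` have overlapping sets of good arms and close estimated
rewards on all active arms, then any good arm of `u` and any good arm of `v`
have true rewards within `16Δ` of each other (for both users). -/
theorem good_arms_of_adjacent_users {N M : ℕ}
    (Pt P : Matrix (Fin N) (Fin M) ℝ) (Δ : ℝ) (hΔ : 0 < Δ)
    (N0 : Finset (Fin M)) (hne : N0.Nonempty)
    (hb : ∀ i : Fin N, ∀ j ∈ N0, |Pt i j - P i j| ≤ Δ)
    (T : Fin N → Finset (Fin M))
    (hT : ∀ w, T w = N0.filter fun j =>
      N0.sup' hne (fun j' => Pt w j') - Pt w j ≤ 2 * Δ)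
    (u v : Fin N)
    (h1 : (T u ∩ T v).Nonempty)
    (h2 : ∀ x ∈ N0, |Pt u x - Pt v x| ≤ 2 * Δ) :
    ∀ x ∈ T u, ∀ y ∈ T v,
      |P u x - P u y| ≤ 16 * Δ ∧ |P v x - P v y| ≤ 16 * Δ :=
  good_arms_of_adjacent_users_general Pt P Δ N0 hne hb T hT u v h2
end

section
/- Under the setting of the previous lemma, consider a graph on rows where u and v are joined by an edge iff T_u ∩ T_v ≠ ∅ and |P̃_{u x} − P̃_{v x}| ≤ 2Δ for all x ∈ N₀. If rows u and v are connected by a path a₁ = u, a₂, …, a_L = v of length L in this graph, then for all x ∈ T_u and y ∈ T_v, |P_{u x} − P_{u y}| ≤ 16LΔ. -/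
/-! Adjacent rows have estimated rewards within `2Δ` of each other on every active arm, so along a
path of length `L` the estimated rewards of `u` and `v` stay within `2(L - 1)Δ`, and so do their
maxima. A good arm of `v` is then a `(2Δ + 4(L - 1)Δ)`-good arm of `u`, whence two good arms of
`u` and `v` have estimated rewards for `u` within `(4L - 2)Δ`; the estimation error adds `2Δ`. -/

theorem abs_sub_le_mul_of_abs_sub_succ_le {f : ℕ → ℝ} {n : ℕ} {c : ℝ}
    (h : ∀ i < n, |f i - f (i + 1)| ≤ c) : |f 0 - f n| ≤ n * c := by
  have := dist_le_range_sum_of_dist_le (f := f) (d := fun _ => c) n fun hi => h _ hi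
  simpa [Real.dist_eq] using this

namespace Finset

variable {κ : Type*} {s : Finset κ} (hs : s.Nonempty) {f g : κ → ℝ} {r : ℝ}

theorem sup'_le_sup'_add (h : ∀ q ∈ s, |f q - g q| ≤ r) : s.sup' hs f ≤ s.sup' hs g + r :=
  sup'_le hs f fun q hq =>
    (le_add_of_sub_left_le (le_of_abs_le (h q hq))).trans (by gcongr; exact le_sup' g hq)

theorem abs_sup'_sub_sup'_le (h : ∀ q ∈ s, |f q - g q| ≤ r) :
    |s.sup' hs f - s.sup' hs g| ≤ r := by
  have hfg := sup'_le_sup'_add hs h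
  have hgf := sup'_le_sup'_add hs (g := f) fun q hq => by rw [abs_sub_comm]; exact h q hq
  rw [abs_sub_le_iff]
  constructor <;> linarith

theorem abs_sub_le_of_sub_le_sup' (hfg : ∀ q ∈ s, |f q - g q| ≤ r) {c : ℝ} {x y : κ}
    (hx : x ∈ s) (hxc : s.sup' hs f - f x ≤ c) (hy : y ∈ s) (hyc : s.sup' hs g - g y ≤ c) :
    |f x - f y| ≤ c + 2 * r := by
  have hsup := abs_sup'_sub_sup'_le hs hfg
  have hfy := hfg y hy
  have hx_le := le_sup' f hx
  have hy_le := le_sup' f hy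
  rw [abs_sub_le_iff] at hsup hfy ⊢
  have hr : 0 ≤ r := (abs_nonneg _).trans (hfg x hx)
  constructor <;> linarith

end Finset

theorem good_arms_along_path_general {N M : ℕ}
    (Pt P : Matrix (Fin N) (Fin M) ℝ) (Δ : ℝ)
    (N0 : Finset (Fin M)) (hne : N0.Nonempty)
    (hb : ∀ i : Fin N, ∀ j ∈ N0, |Pt i j - P i j| ≤ Δ)
    (T : Fin N → Finset (Fin M))
    (hT : ∀ w, T w = N0.filter fun j =>
      N0.sup' hne (fun j' => Pt w j') - Pt w j ≤ 2 * Δ)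
    (adj : Fin N → Fin N → Prop)
    (hadj : ∀ w w', adj w w' ↔
      ((T w ∩ T w').Nonempty ∧ ∀ x ∈ N0, |Pt w x - Pt w' x| ≤ 2 * Δ))
    (u v : Fin N) (L : ℕ) (hL : 0 < L)
    (a : ℕ → Fin N) (ha0 : a 0 = u) (haL : a (L - 1) = v)
    (hpath : ∀ i : ℕ, i + 1 < L → adj (a i) (a (i + 1))) :
    ∀ x ∈ T u, ∀ y ∈ T v, |P u x - P u y| ≤ 16 * L * Δ := by
  intro x hx y hy
  rw [hT, Finset.mem_filter] at hx hy
  have hclose : ∀ q ∈ N0, |Pt u q - Pt v q| ≤ ((L - 1 : ℕ) : ℝ) * (2 * Δ) := by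
    intro q hq
    rw [← ha0, ← haL]
    exact abs_sub_le_mul_of_abs_sub_succ_le fun i hi =>
      ((hadj _ _).mp (hpath i (by omega))).2 q hq
  have hest := Finset.abs_sub_le_of_sub_le_sup' hne hclose hx.1 hx.2 hy.1 hy.2
  have hbx := hb u x hx.1
  have hby := hb u y hy.1
  have hΔ : 0 ≤ Δ := (abs_nonneg _).trans hbx
  have hL' : ((L - 1 : ℕ) : ℝ) = L - 1 := by rw [Nat.cast_sub hL, Nat.cast_one]
  have hL1 : (1 : ℝ) ≤ L := by exact_mod_cast hL
  rw [hL'] at hest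
  rw [abs_sub_comm] at hbx
  calc |P u x - P u y|
      ≤ |P u x - Pt u x| + |Pt u x - Pt u y| + |Pt u y - P u y| :=
        (abs_sub_le _ (Pt u y) _).trans (by gcongr; exact abs_sub_le _ _ _)
    _ ≤ 16 * L * Δ := by nlinarith

/-- If rows `u` and `v` are connected by a path of length `L` in the graph
where two rows are adjacent iff their good-arm sets intersect and their
estimated rewards agree within `2Δ` on all active arms, then any good arm of
`u` and any good arm of `v` have true rewards within `16LΔ` for user `u`. -/
theorem good_arms_along_path {N M : ℕ}
    (Pt P : Matrix (Fin N) (Fin M) ℝ) (Δ : ℝ) (hΔ : 0 < Δ)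
    (N0 : Finset (Fin M)) (hne : N0.Nonempty)
    (hb : ∀ i : Fin N, ∀ j ∈ N0, |Pt i j - P i j| ≤ Δ)
    (T : Fin N → Finset (Fin M))
    (hT : ∀ w, T w = N0.filter fun j =>
      N0.sup' hne (fun j' => Pt w j') - Pt w j ≤ 2 * Δ)
    (adj : Fin N → Fin N → Prop)
    (hadj : ∀ w w', adj w w' ↔
      ((T w ∩ T w').Nonempty ∧ ∀ x ∈ N0, |Pt w x - Pt w' x| ≤ 2 * Δ))
    (u v : Fin N) (L : ℕ) (hL : 0 < L)
    (a : ℕ → Fin N) (ha0 : a 0 = u) (haL : a (L - 1) = v)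
    (hpath : ∀ i : ℕ, i + 1 < L → adj (a i) (a (i + 1))) :
    ∀ x ∈ T u, ∀ y ∈ T v, |P u x - P u y| ≤ 16 * L * Δ :=
  good_arms_along_path_general Pt P Δ N0 hne hb T hT adj hadj u v L hL a ha0 haL hpath
end
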